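/- (Norm bound on the toll iterates.) If 2γ‖A‖² ≤ α, then for every k ∈ ℕ, ‖τ^k‖ ≤ ‖τ⋆‖ + ‖τ⁰ − τ⋆‖ + 2·√(γ·E^k), where E^k = ∑_{s=0}^{k-1} ε^s. -/

import Mathlib

/-!
Each toll update is a projected step on the dual: for `τ' = [τ + γ (A y - b)]₊` the projection
inequality gives `‖τ' - τ⋆‖² ≤ ‖τ - τ⋆‖² + 2γ⟪A y - b, τ' - τ⋆⟫ - ‖τ' - τ‖²`. As
`d τ' ≤ d τ⋆ ≤ L y τ⋆`, the middle term is at most `2γ (L y τ' - d τ')`, and `α`-strong convexity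
makes the `ε`-minimizer `y` of `L(·, τ)` a `(2ε + ‖A‖² ‖τ' - τ‖² / α)`-minimizer of `L(·, τ')`.
The step-size condition `2γ‖A‖² ≤ α` absorbs the last term into `-‖τ' - τ‖²`, leaving
`‖τ^{s+1} - τ⋆‖² ≤ ‖τ^s - τ⋆‖² + 4γε^s`; summing and taking square roots gives the bound.
-/

open scoped RealInnerProductSpace

section StrongConvexity

variable {E : Type*} [NormedAddCommGroup E] [NormedSpace ℝ E] {s : Set E} {m μ ε : ℝ}
  {f g : E → ℝ} {x y z : E}

lemma StrongConvexOn.add_convexOn (hf : StrongConvexOn s m f) (hg : ConvexOn ℝ s g) :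
    StrongConvexOn s m (f + g) := by
  have h := hf.add hg.uniformConvexOn_zero
  rwa [add_zero] at h

lemma StrongConvexOn.add_sq_norm_sub_le_of_isMinOn (hf : StrongConvexOn s m f) (hx : x ∈ s)
    (hy : y ∈ s) (hmin : IsMinOn f s x) : f x + m / 2 * ‖y - x‖ ^ 2 ≤ f y := by
  have hchord : ∀ t ∈ Set.Ioo (0 : ℝ) 1, (1 - t) * (m / 2 * ‖y - x‖ ^ 2) ≤ f y - f x := by
    rintro t ⟨ht0, ht1⟩
    have hconv := hf.2 hy hx ht0.le (sub_nonneg.2 ht1.le) (add_sub_cancel t 1)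
    have hle : f x ≤ f (t • y + (1 - t) • x) :=
      hmin (hf.1 hy hx ht0.le (sub_nonneg.2 ht1.le) (add_sub_cancel t 1))
    simp only [smul_eq_mul] at hconv
    refine le_of_mul_le_mul_left ?_ ht0
    linarith
  have hlim : Filter.Tendsto (fun t : ℝ => (1 - t) * (m / 2 * ‖y - x‖ ^ 2))
      (nhdsWithin 0 (Set.Ioi 0)) (nhds (m / 2 * ‖y - x‖ ^ 2)) :=
    tendsto_nhdsWithin_of_tendsto_nhds ((by fun_prop : Continuous fun t : ℝ =>
      (1 - t) * (m / 2 * ‖y - x‖ ^ 2)).tendsto' 0 _ (by simp))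
  linarith [le_of_tendsto hlim (Filter.eventually_of_mem (Ioo_mem_nhdsGT one_pos) hchord)]

lemma StrongConvexOn.add_sq_norm_sub_le_add_of_isLeast (hf : StrongConvexOn s m f) (hm : 0 ≤ m)
    (hμ : IsLeast (f '' s) μ) (hy : y ∈ s) (hyε : f y ≤ μ + ε) (hz : z ∈ s) :
    f y + m / 4 * ‖z - y‖ ^ 2 ≤ f z + 2 * ε := by
  obtain ⟨⟨x, hx, rfl⟩, hlow⟩ := hμ
  have hmin : IsMinOn f s x := fun w hw => hlow (Set.mem_image_of_mem f hw)
  have hgy := hf.add_sq_norm_sub_le_of_isMinOn hx hy hmin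
  have hgz := hf.add_sq_norm_sub_le_of_isMinOn hx hz hmin
  have htri : ‖z - y‖ ≤ ‖z - x‖ + ‖y - x‖ := by
    simpa only [norm_sub_rev x y] using norm_sub_le_norm_sub_add_norm_sub z x y
  have hsq : ‖z - y‖ ^ 2 ≤ 2 * ‖z - x‖ ^ 2 + 2 * ‖y - x‖ ^ 2 := by
    nlinarith [norm_nonneg (z - y), sq_nonneg (‖z - x‖ - ‖y - x‖)]
  nlinarith

end StrongConvexity

lemma le_add_two_mul_sqrt_of_sq_le {a r c : ℝ} (hr : 0 ≤ r) (hc : 0 ≤ c)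
    (h : a ^ 2 ≤ r ^ 2 + 4 * c) : a ≤ r + 2 * √c := by
  refine le_of_sq_le_sq ?_ (by positivity)
  nlinarith [Real.sq_sqrt hc, Real.sqrt_nonneg c]

lemma le_add_sum_of_le_add {u c : ℕ → ℝ} (h : ∀ n, u (n + 1) ≤ u n + c n) (k : ℕ) :
    u k ≤ u 0 + ∑ i ∈ Finset.range k, c i := by
  induction k with
  | zero => simp
  | succ k ih => rw [Finset.sum_range_succ]; linarith [h k]

lemma norm_sub_sq_le_of_inner_le_zero {F : Type*} [NormedAddCommGroup F] [InnerProductSpace ℝ F]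
    {τ τ' τ₀ g : F} (h : ⟪τ + g - τ', τ₀ - τ'⟫ ≤ 0) :
    ‖τ' - τ₀‖ ^ 2 ≤ ‖τ - τ₀‖ ^ 2 + 2 * ⟪g, τ' - τ₀⟫ - ‖τ' - τ‖ ^ 2 := by
  have hsplit := norm_add_sq_real (τ - τ') (τ' - τ₀)
  rw [sub_add_sub_cancel, norm_sub_rev τ τ'] at hsplit
  have hexp : ⟪τ + g - τ', τ₀ - τ'⟫ = -⟪τ - τ', τ' - τ₀⟫ - ⟪g, τ' - τ₀⟫ := by
    rw [add_sub_right_comm, inner_add_left, ← neg_sub τ' τ₀, inner_neg_right, inner_neg_right]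
    ring
  linarith

lemma inner_sub_posPart_le_zero {κ : Type*} [Fintype κ] {v w σ : EuclideanSpace ℝ κ}
    (hw : ∀ i, w i = max (v i) 0) (hσ : ∀ i, 0 ≤ σ i) : ⟪v - w, σ - w⟫ ≤ 0 := by
  simp only [PiLp.inner_apply, PiLp.sub_apply, RCLike.inner_apply, conj_trivial]
  refine Finset.sum_nonpos fun i _ => ?_
  rw [hw i]
  rcases le_total (v i) 0 with hv | hv
  · rw [max_eq_right hv, sub_zero, sub_zero]
    exact mul_nonpos_of_nonneg_of_nonpos (hσ i) hv
  · simp [max_eq_left hv]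

section Lagrangian

variable {E F : Type*} [NormedAddCommGroup E] [InnerProductSpace ℝ E] [NormedAddCommGroup F]
  [InnerProductSpace ℝ F] {Y : Set E} {F₀ : E → ℝ} {A : E →L[ℝ] F} {b : F} {L : E → F → ℝ}
  {d : F → ℝ} {α : ℝ}

lemma strongConvexOn_lagrangian (hL : ∀ y τ, L y τ = F₀ y + ⟪τ, A y - b⟫)
    (hF₀ : StrongConvexOn Y α F₀) (σ : F) : StrongConvexOn Y α (L · σ) := by
  have hσ : ConvexOn ℝ Y fun y => ⟪σ, A y - b⟫ := by
    refine ((((innerₛₗ ℝ σ).comp A.toLinearMap).convexOn hF₀.1).add_const (-⟪σ, b⟫)).congr ?_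
    intro y _
    simp [inner_sub_right, ← sub_eq_add_neg]
  convert hF₀.add_convexOn hσ using 1
  exact funext fun y => hL y σ

lemma isLeast_dual (hL : ∀ y τ, L y τ = F₀ y + ⟪τ, A y - b⟫)
    (hd : ∀ τ, d τ = sInf ((fun y => L y τ) '' Y)) (hYne : Y.Nonempty) (hYcpt : IsCompact Y)
    (hF₀ : Continuous F₀) (σ : F) : IsLeast ((L · σ) '' Y) (d σ) := by
  have hcont : Continuous (L · σ) := by
    simp only [hL]
    fun_prop
  obtain ⟨μ, hμ⟩ := (hYcpt.image hcont).exists_isLeast (hYne.image _)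
  rwa [hd, hμ.csInf_eq]

lemma lagrangian_le_dual_add (hL : ∀ y τ, L y τ = F₀ y + ⟪τ, A y - b⟫)
    (hd : ∀ σ, IsLeast ((L · σ) '' Y) (d σ)) (hF₀ : StrongConvexOn Y α F₀) (hα : 0 < α)
    {y : E} {τ : F} {ε : ℝ} (hy : y ∈ Y) (hyε : L y τ ≤ d τ + ε) (τ' : F) :
    L y τ' ≤ d τ' + 2 * ε + ‖A‖ ^ 2 * ‖τ' - τ‖ ^ 2 / α := by
  obtain ⟨⟨y', hy', hdy'⟩, -⟩ := hd τ'
  have hgrowth := (strongConvexOn_lagrangian hL hF₀ τ).add_sq_norm_sub_le_add_of_isLeast hα.le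
    (hd τ) hy hyε hy'
  have hshift : L y τ' - L y' τ' = L y τ - L y' τ + ⟪τ' - τ, A (y - y')⟫ := by
    simp only [hL, map_sub, inner_sub_left, inner_sub_right]
    ring
  have hcs : ⟪τ' - τ, A (y - y')⟫ ≤ ‖τ' - τ‖ * (‖A‖ * ‖y' - y‖) := by
    refine (real_inner_le_norm _ _).trans (mul_le_mul_of_nonneg_left ?_ (norm_nonneg _))
    rw [norm_sub_rev y' y]
    exact A.le_opNorm _
  have hAMGM :
      ‖τ' - τ‖ * (‖A‖ * ‖y' - y‖) ≤ α / 4 * ‖y' - y‖ ^ 2 + ‖A‖ ^ 2 * ‖τ' - τ‖ ^ 2 / α := by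
    rw [← sub_nonneg]
    have hsq : α / 4 * ‖y' - y‖ ^ 2 + ‖A‖ ^ 2 * ‖τ' - τ‖ ^ 2 / α - ‖τ' - τ‖ * (‖A‖ * ‖y' - y‖)
        = (α / 2 * ‖y' - y‖ - ‖A‖ * ‖τ' - τ‖) ^ 2 / α := by
      field_simp
      ring
    rw [hsq]
    positivity
  linarith

end Lagrangian

lemma norm_sub_sq_le_of_projected_step {E κ : Type*} [NormedAddCommGroup E]
    [InnerProductSpace ℝ E] [Fintype κ] {Y : Set E} {F₀ : E → ℝ}
    {A : E →L[ℝ] EuclideanSpace ℝ κ} {b : EuclideanSpace ℝ κ}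
    {L : E → EuclideanSpace ℝ κ → ℝ} {d : EuclideanSpace ℝ κ → ℝ} {α γ ε : ℝ}
    (hL : ∀ y τ, L y τ = F₀ y + ⟪τ, A y - b⟫) (hd : ∀ σ, IsLeast ((L · σ) '' Y) (d σ))
    (hF₀ : StrongConvexOn Y α F₀) (hα : 0 < α) (hγ : 0 ≤ γ) (hstep : 2 * γ * ‖A‖ ^ 2 ≤ α)
    {y : E} {τ τ' τ₀ : EuclideanSpace ℝ κ} (hy : y ∈ Y) (hyε : L y τ ≤ d τ + ε)
    (hτ' : ∀ i, τ' i = max (τ i + γ * (A y - b) i) 0) (hτ₀ : ∀ i, 0 ≤ τ₀ i)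
    (hdτ' : d τ' ≤ d τ₀) :
    ‖τ' - τ₀‖ ^ 2 ≤ ‖τ - τ₀‖ ^ 2 + 4 * γ * ε := by
  have hproj := norm_sub_sq_le_of_inner_le_zero
    (inner_sub_posPart_le_zero (v := τ + γ • (A y - b)) (by simpa using hτ') hτ₀)
  have hgap : ⟪A y - b, τ' - τ₀⟫ ≤ 2 * ε + ‖A‖ ^ 2 * ‖τ' - τ‖ ^ 2 / α :=
    calc ⟪A y - b, τ' - τ₀⟫ = L y τ' - L y τ₀ := by
          simp only [hL, inner_sub_right, real_inner_comm]
          ring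
      _ ≤ L y τ' - d τ' := by linarith [(hd τ₀).2 (Set.mem_image_of_mem (L · τ₀) hy)]
      _ ≤ 2 * ε + ‖A‖ ^ 2 * ‖τ' - τ‖ ^ 2 / α := by
          linarith [lagrangian_le_dual_add hL hd hF₀ hα hy hyε τ']
  have habsorb : 2 * γ * (‖A‖ ^ 2 * ‖τ' - τ‖ ^ 2 / α) ≤ ‖τ' - τ‖ ^ 2 := by
    rw [← mul_div_assoc, div_le_iff₀ hα, ← mul_assoc, mul_comm _ α]
    exact mul_le_mul_of_nonneg_right hstep (sq_nonneg _)
  rw [real_inner_smul_left] at hproj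
  linarith [mul_le_mul_of_nonneg_left hgap hγ]

theorem stmt_9_general
    {ι κ : Type*} [Fintype ι] [Fintype κ]
    (Y : Set (EuclideanSpace ℝ ι)) (hYne : Y.Nonempty) (hYcpt : IsCompact Y)
    (α : ℝ) (hα : 0 < α)
    (F₀ : EuclideanSpace ℝ ι → ℝ) (hF₀cont : Continuous F₀)
    (hF₀sc : StrongConvexOn Y α F₀)
    (A : EuclideanSpace ℝ ι →L[ℝ] EuclideanSpace ℝ κ) (b : EuclideanSpace ℝ κ)
    (L : EuclideanSpace ℝ ι → EuclideanSpace ℝ κ → ℝ)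
    (hL : ∀ y τ, L y τ = F₀ y + ⟪τ, A y - b⟫)
    (d : EuclideanSpace ℝ κ → ℝ)
    (hd : ∀ τ, d τ = sInf ((fun y => L y τ) '' Y))
    (γ : ℝ) (hγ : 0 < γ)
    (τs : ℕ → EuclideanSpace ℝ κ) (ys : ℕ → EuclideanSpace ℝ ι) (εs : ℕ → ℝ)
    (hεs : ∀ s, 0 ≤ εs s)
    (hysY : ∀ s, ys s ∈ Y)
    (hyseq : ∀ s, L (ys s) (τs s) ≤ d (τs s) + εs s)
    (hupdate : ∀ s i, τs (s + 1) i = max (τs s i + γ * (A (ys s) - b) i) 0)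
    (τstar : EuclideanSpace ℝ κ) (hτstarpos : ∀ i, 0 ≤ τstar i)
    (hτstarmax : ∀ σ : EuclideanSpace ℝ κ, (∀ i, 0 ≤ σ i) → d σ ≤ d τstar)
    (hstep : 2 * γ * ‖A‖ ^ 2 ≤ α)
    :
    ∀ k : ℕ,
      ‖τs k‖ ≤ ‖τstar‖ + ‖τs 0 - τstar‖ + 2 * Real.sqrt (γ * ∑ s ∈ Finset.range k, εs s) := by
  intro k
  have hdual := isLeast_dual hL hd hYne hYcpt hF₀cont
  have hdescent (s : ℕ) : ‖τs (s + 1) - τstar‖ ^ 2 ≤ ‖τs s - τstar‖ ^ 2 + 4 * γ * εs s :=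
    norm_sub_sq_le_of_projected_step hL hdual hF₀sc hα hγ.le hstep (hysY s) (hyseq s)
      (hupdate s) hτstarpos (hτstarmax _ fun i => (hupdate s i).symm ▸ le_max_right _ _)
  have hdist := le_add_sum_of_le_add (u := fun s => ‖τs s - τstar‖ ^ 2) hdescent k
  rw [← Finset.mul_sum, mul_assoc] at hdist
  calc ‖τs k‖ ≤ ‖τstar‖ + ‖τs k - τstar‖ := norm_le_norm_add_norm_sub' _ _
    _ ≤ ‖τstar‖ + (‖τs 0 - τstar‖ + 2 * √(γ * ∑ s ∈ Finset.range k, εs s)) := by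
      gcongr
      exact le_add_two_mul_sqrt_of_sq_le (norm_nonneg _)
        (mul_nonneg hγ.le (Finset.sum_nonneg fun s _ => hεs s)) hdist
    _ = _ := by ring

theorem stmt_9
    {ι κ : Type*} [Fintype ι] [Fintype κ] [Nonempty ι] [Nonempty κ]
    (Y : Set (EuclideanSpace ℝ ι)) (hYne : Y.Nonempty) (hYcpt : IsCompact Y)
    (hYconv : Convex ℝ Y)
    (α : ℝ) (hα : 0 < α)
    (F₀ : EuclideanSpace ℝ ι → ℝ) (hF₀cont : Continuous F₀)
    (hF₀sc : StrongConvexOn Y α F₀)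
    (A : EuclideanSpace ℝ ι →L[ℝ] EuclideanSpace ℝ κ) (b : EuclideanSpace ℝ κ)
    (L : EuclideanSpace ℝ ι → EuclideanSpace ℝ κ → ℝ)
    (hL : ∀ y τ, L y τ = F₀ y + ⟪τ, A y - b⟫)
    (d : EuclideanSpace ℝ κ → ℝ)
    (hd : ∀ τ, d τ = sInf ((fun y => L y τ) '' Y))
    (γ : ℝ) (hγ : 0 < γ)
    (τs : ℕ → EuclideanSpace ℝ κ) (ys : ℕ → EuclideanSpace ℝ ι) (εs : ℕ → ℝ)
    (hτ0 : ∀ i, 0 ≤ τs 0 i)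
    (hεs : ∀ s, 0 ≤ εs s)
    (hysY : ∀ s, ys s ∈ Y)
    (hyseq : ∀ s, L (ys s) (τs s) ≤ d (τs s) + εs s)
    (hupdate : ∀ s i, τs (s + 1) i = max (τs s i + γ * (A (ys s) - b) i) 0)
    (τstar : EuclideanSpace ℝ κ) (hτstarpos : ∀ i, 0 ≤ τstar i)
    (hτstarmax : ∀ σ : EuclideanSpace ℝ κ, (∀ i, 0 ≤ σ i) → d σ ≤ d τstar)
    (hstep : 2 * γ * ‖A‖ ^ 2 ≤ α)
    :
    ∀ k : ℕ,
      ‖τs k‖ ≤ ‖τstar‖ + ‖τs 0 - τstar‖ + 2 * Real.sqrt (γ * ∑ s ∈ Finset.range k, εs s) :=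
  stmt_9_general Y hYne hYcpt α hα F₀ hF₀cont hF₀sc A b L hL d hd γ hγ τs ys εs hεs hysY hyseq
    hupdate τstar hτstarpos hτstarmax hstep
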